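/- Under consistency, transportability of conditional mean differences over trial participation for treatments a=2 versus a=0 (E[Y^{a=2} − Y^{a=0} | X, S=1] = E[Y^{a=2} − Y^{a=0} | X, S=0]), exchangeability and positivity over treatment a=0 in the index trial, exchangeability and positivity over treatments a=0 and a=2 in the external population, and positivity of external selection, the potential outcome mean E[Y^{a=2} | S=1] equals λ = γ_{0,2} + γ_{1,0} − γ_{0,0}, where γ_{s,a} = E[ E[Y | X, S=s, A=a] | S=1 ]. -/

import Mathlib

open scoped Classical BigOperators
open Finset

noncomputable section

/-- Indicator of a proposition. -/
def ind (P : Prop) : ℝ := if P then 1 else 0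

/-- Expectation with respect to weights `p` on a finite outcome space. -/
def pexp {Ω : Type*} [Fintype Ω] (p : Ω → ℝ) (f : Ω → ℝ) : ℝ := ∑ ω, p ω * f ω

/-- Probability of an event. -/
def prob {Ω : Type*} [Fintype Ω] (p : Ω → ℝ) (B : Ω → Prop) : ℝ :=
  pexp p (fun ω => ind (B ω))

/-- Conditional expectation of `f` given event `B`. -/
def cexp {Ω : Type*} [Fintype Ω] (p : Ω → ℝ) (f : Ω → ℝ) (B : Ω → Prop) : ℝ :=
  pexp p (fun ω => f ω * ind (B ω)) / prob p B

/-- Conditional probability of `B` given `C`. -/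
def cprob {Ω : Type*} [Fintype Ω] (p : Ω → ℝ) (B C : Ω → Prop) : ℝ :=
  prob p (fun ω => B ω ∧ C ω) / prob p C

/-- Conditional outcome mean `g_{s,a}(x) = E[Y | X = x, S = s, A = a]`. -/
def gfun {Ω 𝒳 : Type*} [Fintype Ω] (p : Ω → ℝ) (X : Ω → 𝒳) (S A : Ω → ℕ)
    (Y : Ω → ℝ) (s a : ℕ) (x : 𝒳) : ℝ :=
  cexp p Y (fun ω => X ω = x ∧ S ω = s ∧ A ω = a)

/-- Standardized functional `γ_{s,a} = E[ E[Y | X, S=s, A=a] | S=1 ]`. -/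
def gam {Ω 𝒳 : Type*} [Fintype Ω] (p : Ω → ℝ) (X : Ω → 𝒳) (S A : Ω → ℕ)
    (Y : Ω → ℝ) (s a : ℕ) : ℝ :=
  cexp p (fun ω => gfun p X S A Y s a (X ω)) (fun ω => S ω = 1)

/-- Participation probability `p_s(x) = Pr[S = s | X = x]`. -/
def psel {Ω 𝒳 : Type*} [Fintype Ω] (p : Ω → ℝ) (X : Ω → 𝒳) (S : Ω → ℕ)
    (s : ℕ) (x : 𝒳) : ℝ :=
  cprob p (fun ω => S ω = s) (fun ω => X ω = x)

/-- Treatment probability `e_{s,a}(x) = Pr[A = a | X = x, S = s]`. -/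
def etrt {Ω 𝒳 : Type*} [Fintype Ω] (p : Ω → ℝ) (X : Ω → 𝒳) (S A : Ω → ℕ)
    (s a : ℕ) (x : 𝒳) : ℝ :=
  cprob p (fun ω => A ω = a) (fun ω => X ω = x ∧ S ω = s)

/-- Weight `w_{s,a}(X,S,A) = I(S=s, A=a) p_1(X) / (e_{s,a}(X) p_s(X))`. -/
def wgt {Ω 𝒳 : Type*} [Fintype Ω] (p : Ω → ℝ) (X : Ω → 𝒳) (S A : Ω → ℕ)
    (s a : ℕ) (ω : Ω) : ℝ :=
  ind (S ω = s ∧ A ω = a) * psel p X S 1 (X ω) /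
    (etrt p X S A s a (X ω) * psel p X S s (X ω))

/-- Influence function `Γ_{s,a}(O)`. -/
def Gam {Ω 𝒳 : Type*} [Fintype Ω] (p : Ω → ℝ) (X : Ω → 𝒳) (S A : Ω → ℕ)
    (Y : Ω → ℝ) (s a : ℕ) (ω : Ω) : ℝ :=
  (1 / prob p (fun ω' => S ω' = 1)) *
    (ind (S ω = 1) * (gfun p X S A Y s a (X ω) - gam p X S A Y s a)
      + wgt p X S A s a ω * (Y ω - gfun p X S A Y s a (X ω)))

/-- Variance of `f` under `p`. -/
def pvar {Ω : Type*} [Fintype Ω] (p : Ω → ℝ) (f : Ω → ℝ) : ℝ :=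
  pexp p (fun ω => (f ω - pexp p f) ^ 2)

/-! The potential outcome mean is identified stratum by stratum: on `X = x` in the trial,
`E[Y²] = E[Y² − Y⁰] + E[Y⁰]`; the difference is transported to the external population, where both
potential outcomes are identified by exchangeability, and `E[Y⁰]` is identified in the trial
itself. Averaging over `X` given `S = 1` (the tower property) turns the three conditional means
`g_{s,a}(X)` into the three functionals `γ_{s,a}`. -/

section FiniteProbability

variable {Ω 𝒳 : Type*} [Fintype Ω] {p : Ω → ℝ}

lemma ind_nonneg (P : Prop) : 0 ≤ ind P := by
  unfold ind; split <;> norm_num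

lemma ind_and (P Q : Prop) : ind (P ∧ Q) = ind P * ind Q := by
  by_cases hP : P <;> by_cases hQ : Q <;> simp [ind, hP, hQ]

lemma prob_nonneg (hp0 : ∀ ω, 0 ≤ p ω) (B : Ω → Prop) : 0 ≤ prob p B :=
  Finset.sum_nonneg fun ω _ => mul_nonneg (hp0 ω) (ind_nonneg _)

lemma prob_pos_of_mem (hp0 : ∀ ω, 0 ≤ p ω) {B : Ω → Prop} {ω : Ω} (hpω : 0 < p ω)
    (hB : B ω) : 0 < prob p B := by
  have hterm : p ω * ind (B ω) ≤ prob p B :=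
    Finset.single_le_sum (f := fun ω' => p ω' * ind (B ω'))
      (fun ω' _ => mul_nonneg (hp0 ω') (ind_nonneg _)) (Finset.mem_univ ω)
  simp only [ind, hB, if_true, mul_one] at hterm
  exact hpω.trans_le hterm

lemma eq_zero_of_prob_eq_zero (hp0 : ∀ ω, 0 ≤ p ω) {B : Ω → Prop} (h : prob p B = 0)
    {ω : Ω} (hB : B ω) : p ω = 0 :=
  le_antisymm (not_lt.mp fun hpω => (prob_pos_of_mem hp0 hpω hB).ne' h) (hp0 ω)

lemma prob_pos_of_cprob_pos (hp0 : ∀ ω, 0 ≤ p ω) {B C : Ω → Prop} (h : 0 < cprob p B C) :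
    0 < prob p (fun ω => B ω ∧ C ω) := by
  refine (prob_nonneg hp0 _).lt_of_ne fun h0 => h.ne' ?_
  rw [cprob, ← h0, zero_div]

lemma cexp_congr {f g : Ω → ℝ} {B : Ω → Prop} (h : ∀ ω, p ω ≠ 0 → B ω → f ω = g ω) :
    cexp p f B = cexp p g B := by
  unfold cexp pexp
  congr 1
  refine Finset.sum_congr rfl fun ω _ => ?_
  by_cases hpω : p ω = 0
  · simp [hpω]
  by_cases hB : B ω
  · simp only [h ω hpω hB]
  · simp [ind, hB]

lemma cexp_add (f g : Ω → ℝ) (B : Ω → Prop) :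
    cexp p (fun ω => f ω + g ω) B = cexp p f B + cexp p g B := by
  simp only [cexp, pexp, ← add_div, ← Finset.sum_add_distrib, add_mul, mul_add]

lemma cexp_sub (f g : Ω → ℝ) (B : Ω → Prop) :
    cexp p (fun ω => f ω - g ω) B = cexp p f B - cexp p g B := by
  simp only [cexp, pexp, ← sub_div, ← Finset.sum_sub_distrib, sub_mul, mul_sub]

/-- With nonnegative weights this holds also when `prob p B = 0`, where `cexp p f B` is junk. -/
lemma cexp_mul_prob (hp0 : ∀ ω, 0 ≤ p ω) (f : Ω → ℝ) (B : Ω → Prop) :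
    cexp p f B * prob p B = pexp p (fun ω => f ω * ind (B ω)) := by
  by_cases hB : prob p B = 0
  · refine hB ▸ (mul_zero _).trans (Finset.sum_eq_zero fun ω _ => ?_).symm
    by_cases hBω : B ω
    · rw [eq_zero_of_prob_eq_zero hp0 hB hBω, zero_mul]
    · simp [ind, hBω]
  · exact div_mul_cancel₀ _ hB

lemma pexp_eq_sum_fibers [DecidableEq 𝒳] (X : Ω → 𝒳) (g : Ω → ℝ) :
    pexp p g = ∑ x ∈ Finset.univ.image X, pexp p (fun ω => g ω * ind (X ω = x)) := by
  unfold pexp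
  rw [Finset.sum_comm]
  refine Finset.sum_congr rfl fun ω _ => ?_
  simp only [ind, mul_ite, mul_one, mul_zero, Finset.sum_ite_eq, Finset.mem_image_of_mem X
    (Finset.mem_univ ω), if_true]

lemma cexp_cexp_fiber (hp0 : ∀ ω, 0 ≤ p ω) (X : Ω → 𝒳) (f : Ω → ℝ) (B : Ω → Prop) :
    cexp p (fun ω => cexp p f (fun ω' => X ω' = X ω ∧ B ω')) B = cexp p f B := by
  unfold cexp
  congr 1
  rw [pexp_eq_sum_fibers X, pexp_eq_sum_fibers X]
  refine Finset.sum_congr rfl fun x _ => ?_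
  calc pexp p (fun ω => cexp p f (fun ω' => X ω' = X ω ∧ B ω') * ind (B ω) * ind (X ω = x))
      = cexp p f (fun ω => X ω = x ∧ B ω) * prob p (fun ω => X ω = x ∧ B ω) := by
        unfold prob pexp
        rw [Finset.mul_sum]
        refine Finset.sum_congr rfl fun ω _ => ?_
        by_cases hx : X ω = x
        · simp only [hx, ind_and]; ring
        · simp [ind, hx]
    _ = pexp p (fun ω => f ω * ind (B ω) * ind (X ω = x)) := by
        rw [cexp_mul_prob hp0]
        exact Finset.sum_congr rfl fun ω _ => by simp only [ind_and]; ring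

end FiniteProbability

lemma cexp_stratum_identification {Ω 𝒳 : Type*} [Fintype Ω] {p : Ω → ℝ} (X : Ω → 𝒳)
    (S A : Ω → ℕ) (Y : Ω → ℝ) (Ypo : ℕ → Ω → ℝ) (x : 𝒳)
    (hcons : ∀ ω a, A ω = a → Ypo a ω = Y ω)
    (htransport : cexp p (fun ω => Ypo 2 ω - Ypo 0 ω) (fun ω => X ω = x ∧ S ω = 1) =
      cexp p (fun ω => Ypo 2 ω - Ypo 0 ω) (fun ω => X ω = x ∧ S ω = 0))
    (hexch₁ : cexp p (Ypo 0) (fun ω => X ω = x ∧ S ω = 1) =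
      cexp p (Ypo 0) (fun ω => X ω = x ∧ S ω = 1 ∧ A ω = 0))
    (hexch₀ : ∀ a ∈ ({0, 2} : Set ℕ), cexp p (Ypo a) (fun ω => X ω = x ∧ S ω = 0) =
      cexp p (Ypo a) (fun ω => X ω = x ∧ S ω = 0 ∧ A ω = a)) :
    cexp p (Ypo 2) (fun ω => X ω = x ∧ S ω = 1) =
      gfun p X S A Y 0 2 x + gfun p X S A Y 1 0 x - gfun p X S A Y 0 0 x := by
  have hg : ∀ s a, cexp p (Ypo a) (fun ω => X ω = x ∧ S ω = s ∧ A ω = a) =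
      gfun p X S A Y s a x := fun s a => cexp_congr fun ω _ h => hcons ω a h.2.2
  calc cexp p (Ypo 2) (fun ω => X ω = x ∧ S ω = 1)
      = cexp p (fun ω => Ypo 2 ω - Ypo 0 ω) (fun ω => X ω = x ∧ S ω = 1) +
          cexp p (Ypo 0) (fun ω => X ω = x ∧ S ω = 1) := by
        rw [← cexp_add]; simp only [sub_add_cancel]
    _ = gfun p X S A Y 0 2 x + gfun p X S A Y 1 0 x - gfun p X S A Y 0 0 x := by
        rw [htransport, hexch₁, cexp_sub, hexch₀ 0 (by simp), hexch₀ 2 (by simp), hg, hg, hg]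
        ring

theorem statement2_general
    {Ω 𝒳 : Type*} [Fintype Ω] (p : Ω → ℝ)
    (hp0 : ∀ ω, 0 ≤ p ω)
    (X : Ω → 𝒳) (S A : Ω → ℕ) (Y : Ω → ℝ) (Ypo : ℕ → Ω → ℝ)
    (hcons : ∀ ω a, A ω = a → Ypo a ω = Y ω)
    (hA4' : ∀ x, 0 < prob p (fun ω => X ω = x ∧ S ω = 1) →
      cexp p (fun ω => Ypo 2 ω - Ypo 0 ω) (fun ω => X ω = x ∧ S ω = 1) =
        cexp p (fun ω => Ypo 2 ω - Ypo 0 ω) (fun ω => X ω = x ∧ S ω = 0))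
    (hA2 : ∀ x, 0 < prob p (fun ω => X ω = x ∧ S ω = 1) →
      cexp p (Ypo 0) (fun ω => X ω = x ∧ S ω = 1) =
        cexp p (Ypo 0) (fun ω => X ω = x ∧ S ω = 1 ∧ A ω = 0))
    (hA5 : ∀ x, 0 < prob p (fun ω => X ω = x ∧ S ω = 1) →
      0 < cprob p (fun ω => S ω = 0) (fun ω => X ω = x))
    (hA6 : ∀ x, ∀ a ∈ ({0, 2} : Set ℕ), 0 < prob p (fun ω => X ω = x ∧ S ω = 0) →
      cexp p (Ypo a) (fun ω => X ω = x ∧ S ω = 0) =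
        cexp p (Ypo a) (fun ω => X ω = x ∧ S ω = 0 ∧ A ω = a)) :
    cexp p (Ypo 2) (fun ω => S ω = 1) =
      gam p X S A Y 0 2 + gam p X S A Y 1 0 - gam p X S A Y 0 0 := by
  have hstratum : ∀ ω, p ω ≠ 0 → S ω = 1 →
      cexp p (Ypo 2) (fun ω' => X ω' = X ω ∧ S ω' = 1) = gfun p X S A Y 0 2 (X ω) +
        gfun p X S A Y 1 0 (X ω) - gfun p X S A Y 0 0 (X ω) := by
    intro ω hpω hSω
    have h₁ : 0 < prob p (fun ω' => X ω' = X ω ∧ S ω' = 1) :=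
      prob_pos_of_mem hp0 ((hp0 ω).lt_of_ne' hpω) ⟨rfl, hSω⟩
    have h₀ : 0 < prob p (fun ω' => X ω' = X ω ∧ S ω' = 0) := by
      simpa only [and_comm] using prob_pos_of_cprob_pos hp0 (hA5 _ h₁)
    exact cexp_stratum_identification X S A Y Ypo _ hcons (hA4' _ h₁) (hA2 _ h₁)
      fun a ha => hA6 _ a ha h₀
  rw [← cexp_cexp_fiber hp0 X, cexp_congr fun ω hpω hSω => hstratum ω hpω hSω, cexp_sub,
    cexp_add]
  rfl

theorem statement2
    {Ω 𝒳 : Type*} [Fintype Ω] (p : Ω → ℝ)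
    (hp0 : ∀ ω, 0 ≤ p ω) (hp1 : ∑ ω, p ω = 1)
    (X : Ω → 𝒳) (S A : Ω → ℕ) (Y : Ω → ℝ) (Ypo : ℕ → Ω → ℝ)
    (hS : 0 < prob p (fun ω => S ω = 1))
    (hcons : ∀ ω a, A ω = a → Ypo a ω = Y ω)
    (hA4' : ∀ x, 0 < prob p (fun ω => X ω = x ∧ S ω = 1) →
      cexp p (fun ω => Ypo 2 ω - Ypo 0 ω) (fun ω => X ω = x ∧ S ω = 1) =
        cexp p (fun ω => Ypo 2 ω - Ypo 0 ω) (fun ω => X ω = x ∧ S ω = 0))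
    (hA2 : ∀ x, 0 < prob p (fun ω => X ω = x ∧ S ω = 1) →
      cexp p (Ypo 0) (fun ω => X ω = x ∧ S ω = 1) =
        cexp p (Ypo 0) (fun ω => X ω = x ∧ S ω = 1 ∧ A ω = 0))
    (hA3 : ∀ x, 0 < prob p (fun ω => X ω = x ∧ S ω = 1) →
      0 < cprob p (fun ω => A ω = 0) (fun ω => X ω = x ∧ S ω = 1))
    (hA5 : ∀ x, 0 < prob p (fun ω => X ω = x ∧ S ω = 1) →
      0 < cprob p (fun ω => S ω = 0) (fun ω => X ω = x))
    (hA6 : ∀ x, ∀ a ∈ ({0, 2} : Set ℕ), 0 < prob p (fun ω => X ω = x ∧ S ω = 0) →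
      cexp p (Ypo a) (fun ω => X ω = x ∧ S ω = 0) =
        cexp p (Ypo a) (fun ω => X ω = x ∧ S ω = 0 ∧ A ω = a))
    (hA7 : ∀ x, ∀ a ∈ ({0, 2} : Set ℕ), 0 < prob p (fun ω => X ω = x ∧ S ω = 0) →
      0 < cprob p (fun ω => A ω = a) (fun ω => X ω = x ∧ S ω = 0)) :
    cexp p (Ypo 2) (fun ω => S ω = 1) =
      gam p X S A Y 0 2 + gam p X S A Y 1 0 - gam p X S A Y 0 0 :=
  statement2_general p hp0 X S A Y Ypo hcons hA4' hA2 hA5 hA6
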